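/- Given any total computable injection p : ℕ → ℕ, there is a computable permutation π : ℕ → ℕ such that for every set S ⊆ ℕ, the preimage set π⁻¹(S) = {n : π(n) ∈ S} has the same upper asymptotic density and the same lower asymptotic density as p⁻¹(S) = {n : p(n) ∈ S}. -/

import Mathlib

open Filter

open scoped Classical

/-- The `n`-th partial density of `S ⊆ ℕ`: `|S ∩ [0,n)| / n`. -/
noncomputable def partialDensity (S : Set ℕ) (n : ℕ) : ℝ :=
  (((Finset.range n).filter (fun m => m ∈ S)).card : ℝ) / n

/-- `S` has asymptotic density `d`. -/
def HasDensity (S : Set ℕ) (d : ℝ) : Prop :=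
  Tendsto (partialDensity S) atTop (nhds d)

/-- The upper asymptotic density of `S`. -/
noncomputable def upperDensity (S : Set ℕ) : ℝ :=
  limsup (partialDensity S) atTop

/-- The lower asymptotic density of `S`. -/
noncomputable def lowerDensity (S : Set ℕ) : ℝ :=
  liminf (partialDensity S) atTop

/-- A computable permutation of `ℕ`. -/
def ComputablePerm (π : ℕ → ℕ) : Prop :=
  Function.Bijective π ∧ Computable π

/-- `A` is computably enumerable: the domain of a partial computable function. -/
def CE (A : Set ℕ) : Prop :=
  ∃ f : ℕ →. ℕ, Partrec f ∧ ∀ n, n ∈ A ↔ (f n).Dom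

/-- The principal function of `S`: `p_S n` is the least `x` with `|S ∩ [0,x)| ≥ n`. -/
noncomputable def principalFn (S : Set ℕ) (n : ℕ) : ℕ :=
  sInf {x | n ≤ ((Finset.range x).filter (fun m => m ∈ S)).card}

/-!
Build `π` greedily: at time `n` output the first value `p t` not output yet (some `t ≤ n` works,
as `p` is injective), except at the perfect squares `n`, where the least number not output yet is
inserted instead. After `k` squares all of `0, …, k - 1` have appeared, so `π` is onto. Off the
squares `π n ∈ p '' [0, n]`, hence the `N`-element sets `π '' [0, N)` and `p '' [0, N)` differ in
at most `√N + 1` elements, which does not affect the partial densities asymptotically.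
-/

open Filter Finset Function Topology

lemma partialDensity_nonneg (S : Set ℕ) (N : ℕ) : 0 ≤ partialDensity S N := by
  unfold partialDensity; positivity

lemma partialDensity_le_one (S : Set ℕ) (N : ℕ) : partialDensity S N ≤ 1 :=
  div_le_one_of_le₀ (by exact_mod_cast (card_filter_le _ _).trans (card_range N).le)
    (Nat.cast_nonneg _)

lemma card_filter_le_card_filter_add_card_sdiff {α : Type*} [DecidableEq α] (A B : Finset α)
    (q : α → Prop) [DecidablePred q] : #{a ∈ A | q a} ≤ #{b ∈ B | q b} + #(A \ B) := by
  refine (card_le_card fun a ha => ?_).trans (card_union_le _ _)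
  rw [mem_filter] at ha
  by_cases haB : a ∈ B
  · exact mem_union_left _ (mem_filter.2 ⟨haB, ha.2⟩)
  · exact mem_union_right _ (mem_sdiff.2 ⟨ha.1, haB⟩)

lemma card_filter_range_preimage {f : ℕ → ℕ} (hf : Injective f) (S : Set ℕ) (N : ℕ) :
    #{n ∈ range N | n ∈ f ⁻¹' S} = #{m ∈ (range N).image f | m ∈ S} := by
  rw [filter_image, card_image_of_injective _ hf]
  rfl

lemma abs_partialDensity_preimage_sub_le {f g : ℕ → ℕ} (hf : Injective f) (hg : Injective g)
    (S : Set ℕ) (N : ℕ) :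
    |partialDensity (f ⁻¹' S) N - partialDensity (g ⁻¹' S) N| ≤
      #((range N).image f \ (range N).image g) / N := by
  set A := (range N).image f
  set B := (range N).image g
  have hBA : #(B \ A) = #(A \ B) := card_sdiff_comm (by
    rw [card_image_of_injective _ hf, card_image_of_injective _ hg])
  have hAB := card_filter_le_card_filter_add_card_sdiff A B (· ∈ S)
  have hBA' := card_filter_le_card_filter_add_card_sdiff B A (· ∈ S)
  simp only [partialDensity, card_filter_range_preimage hf, card_filter_range_preimage hg,
    ← sub_div, abs_div, Nat.abs_cast]
  gcongr
  rw [abs_sub_le_iff, sub_le_iff_le_add', sub_le_iff_le_add']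
  exact ⟨by exact_mod_cast hAB, by rw [← hBA]; exact_mod_cast hBA'⟩

lemma card_image_sdiff_le_card_filter {f g : ℕ → ℕ} {E : Set ℕ}
    (hfg : ∀ n ∉ E, ∃ t ≤ n, g t = f n) (N : ℕ) :
    #((range N).image f \ (range N).image g) ≤ #{n ∈ range N | n ∈ E} := by
  refine (card_le_card fun m hm => ?_).trans (card_image_le (f := f))
  obtain ⟨hmf, hmg⟩ := mem_sdiff.1 hm
  obtain ⟨n, hn, rfl⟩ := mem_image.1 hmf
  refine mem_image_of_mem f (mem_filter.2 ⟨hn, not_not.1 fun hnE => hmg ?_⟩)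
  obtain ⟨t, htn, hgt⟩ := hfg n hnE
  exact mem_image.2 ⟨t, mem_range.2 (htn.trans_lt (mem_range.1 hn)), hgt⟩

section LimsupAdd

variable {ι : Type*} {l : Filter ι} [l.NeBot] {u w : ι → ℝ}

lemma limsup_add_of_tendsto_zero (hu : IsBoundedUnder (· ≤ ·) l u)
    (hu' : IsBoundedUnder (· ≥ ·) l u) (hw : Tendsto w l (𝓝 0)) :
    limsup (u + w) l = limsup u l := by
  have hw_le := hw.isBoundedUnder_le
  have hw_ge := hw.isBoundedUnder_ge
  apply le_antisymm
  · simpa [hw.limsup_eq] using limsup_add_le hu' hu hw_ge.isCoboundedUnder_le hw_le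
  · simpa [hw.liminf_eq] using le_limsup_add hu hu'.isCoboundedUnder_le hw_le hw_ge

lemma liminf_add_of_tendsto_zero (hu : IsBoundedUnder (· ≤ ·) l u)
    (hu' : IsBoundedUnder (· ≥ ·) l u) (hw : Tendsto w l (𝓝 0)) :
    liminf (u + w) l = liminf u l := by
  have hw_le := hw.isBoundedUnder_le
  have hw_ge := hw.isBoundedUnder_ge
  apply le_antisymm
  · simpa [add_comm u, hw.limsup_eq] using liminf_add_le hw_ge hw_le hu' hu.isCoboundedUnder_ge
  · simpa [hw.liminf_eq] using le_liminf_add hu' hu hw_ge hw_le.isCoboundedUnder_ge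

end LimsupAdd

theorem upperDensity_lowerDensity_preimage_eq {f g : ℕ → ℕ} (hf : Injective f)
    (hg : Injective g) {E : Set ℕ} (hE : HasDensity E 0) (hfg : ∀ n ∉ E, ∃ t ≤ n, g t = f n)
    (S : Set ℕ) :
    upperDensity (f ⁻¹' S) = upperDensity (g ⁻¹' S) ∧
      lowerDensity (f ⁻¹' S) = lowerDensity (g ⁻¹' S) := by
  set w := partialDensity (f ⁻¹' S) - partialDensity (g ⁻¹' S)
  have hw : Tendsto w atTop (𝓝 0) := by
    refine squeeze_zero_norm (fun N => ?_) hE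
    refine (abs_partialDensity_preimage_sub_le hf hg S N).trans ?_
    unfold partialDensity
    gcongr ?_ / _
    exact_mod_cast card_image_sdiff_le_card_filter hfg N
  have hfw : partialDensity (f ⁻¹' S) = partialDensity (g ⁻¹' S) + w := by
    simp only [w, add_sub_cancel]
  have hbdd : IsBoundedUnder (· ≤ ·) atTop (partialDensity (g ⁻¹' S)) :=
    isBoundedUnder_of ⟨1, partialDensity_le_one _⟩
  have hbdd' : IsBoundedUnder (· ≥ ·) atTop (partialDensity (g ⁻¹' S)) :=
    isBoundedUnder_of ⟨0, partialDensity_nonneg _⟩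
  exact ⟨by rw [upperDensity, hfw, limsup_add_of_tendsto_zero hbdd hbdd' hw]; rfl,
    by rw [lowerDensity, hfw, liminf_add_of_tendsto_zero hbdd hbdd' hw]; rfl⟩

section FirstFresh

/-- The least `t ≤ l.length` with `f t ∉ l`, or `l.length + 1` if there is none. -/
def firstFresh (f : ℕ → ℕ) (l : List ℕ) : ℕ :=
  (List.range (l.length + 1)).findIdx fun t => f t ∉ l

variable {f : ℕ → ℕ} {l : List ℕ}

lemma exists_le_length_apply_notMem (hf : Injective f) (l : List ℕ) :
    ∃ t ≤ l.length, f t ∉ l := by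
  have hcard : #l.toFinset < #((range (l.length + 1)).image f) := by
    rw [card_image_of_injective _ hf, card_range]
    exact Nat.lt_succ_of_le l.toFinset_card_le
  obtain ⟨_, ht, hnot⟩ := exists_mem_notMem_of_card_lt_card hcard
  obtain ⟨t, htN, rfl⟩ := mem_image.1 ht
  exact ⟨t, Nat.lt_succ_iff.1 (mem_range.1 htN), fun h => hnot (List.mem_toFinset.2 h)⟩

lemma firstFresh_le_length (hf : Injective f) (l : List ℕ) : firstFresh f l ≤ l.length := by
  obtain ⟨t, ht, hnot⟩ := exists_le_length_apply_notMem hf l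
  simpa [firstFresh, Nat.lt_succ_iff] using List.findIdx_lt_length_of_exists
    (p := fun t => decide (f t ∉ l)) ⟨t, List.mem_range.2 (Nat.lt_succ_of_le ht), by simpa⟩

lemma apply_firstFresh_notMem (hf : Injective f) (l : List ℕ) : f (firstFresh f l) ∉ l := by
  have hlt : firstFresh f l < (List.range (l.length + 1)).length := by
    simpa [Nat.lt_succ_iff] using firstFresh_le_length hf l
  simpa [firstFresh] using List.findIdx_getElem (w := hlt)

lemma apply_mem_of_lt_firstFresh {t : ℕ} (ht : t < firstFresh f l) : f t ∈ l := by
  simpa using List.not_of_lt_findIdx ht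

end FirstFresh

section PatchedEnumeration

variable (P : ℕ → Prop) [DecidablePred P] (p : ℕ → ℕ)

/-- `l` lists the values output so far, so `l.length` is the current time. -/
def patchStep (l : List ℕ) : ℕ :=
  if P l.length then firstFresh id l else p (firstFresh p l)

def patchHist : ℕ → List ℕ
  | 0 => []
  | n + 1 => patchHist n ++ [patchStep P p (patchHist n)]

def patchPerm (n : ℕ) : ℕ :=
  patchStep P p (patchHist P p n)

lemma patchHist_eq_map (n : ℕ) : patchHist P p n = (List.range n).map (patchPerm P p) := by
  induction n with
  | zero => rfl
  | succ n ih => rw [patchHist, List.range_succ, List.map_append, ← ih]; rfl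

lemma length_patchHist (n : ℕ) : (patchHist P p n).length = n := by
  simp [patchHist_eq_map]

lemma mem_patchHist {n v : ℕ} : v ∈ patchHist P p n ↔ ∃ m < n, patchPerm P p m = v := by
  simp [patchHist_eq_map]

variable {P p}

lemma patchPerm_notMem_patchHist (hp : Injective p) (n : ℕ) :
    patchPerm P p n ∉ patchHist P p n := by
  unfold patchPerm patchStep
  split_ifs
  · exact apply_firstFresh_notMem injective_id _
  · exact apply_firstFresh_notMem hp _

lemma patchPerm_injective (hp : Injective p) : Injective (patchPerm P p) :=
  .of_lt_imp_ne fun m n hmn h =>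
    patchPerm_notMem_patchHist hp n ((mem_patchHist P p).2 ⟨m, hmn, h⟩)

lemma exists_le_apply_eq_patchPerm (hp : Injective p) {n : ℕ} (hn : ¬ P n) :
    ∃ t ≤ n, p t = patchPerm P p n := by
  refine ⟨firstFresh p (patchHist P p n), ?_, ?_⟩
  · simpa [length_patchHist] using firstFresh_le_length hp (patchHist P p n)
  · simp [patchPerm, patchStep, length_patchHist, hn]

lemma mem_patchHist_of_lt_count {n v : ℕ} (hv : v < Nat.count P n) : v ∈ patchHist P p n := by
  induction n generalizing v with
  | zero => simp at hv
  | succ n ih =>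
    rw [patchHist, List.mem_append]
    rw [Nat.count_succ] at hv
    rcases lt_or_ge v (Nat.count P n) with hvn | hvn
    · exact Or.inl (ih hvn)
    by_cases hPn : P n
    · refine or_iff_not_imp_left.2 fun hvHist => List.mem_singleton.2 ?_
      have hle : firstFresh id (patchHist P p n) ≤ v :=
        not_lt.1 fun h => hvHist (apply_mem_of_lt_firstFresh (f := id) h)
      have hge : Nat.count P n ≤ firstFresh id (patchHist P p n) :=
        not_lt.1 fun h => apply_firstFresh_notMem injective_id _ (ih h)
      simp only [patchStep, length_patchHist, if_pos hPn]
      simp only [if_pos hPn] at hv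
      omega
    · simp only [if_neg hPn] at hv
      omega

lemma patchPerm_surjective (hP : {n | P n}.Infinite) : Surjective (patchPerm P p) := by
  intro v
  obtain ⟨n, hn⟩ := Nat.surjective_count_of_infinite_setOfPred hP (v + 1)
  obtain ⟨m, -, hm⟩ :=
    (mem_patchHist P p (n := n)).1 (mem_patchHist_of_lt_count (hn ▸ Nat.lt_add_one v))
  exact ⟨m, hm⟩

end PatchedEnumeration

section Computability

lemma Computable.list_map_range {α : Type*} [Primcodable α] {f : ℕ → α} (hf : Computable f) :
    Computable fun n => (List.range n).map f :=
  (Computable.nat_rec .id (.const []) (Computable.list_concat.comp (Computable.snd.comp .snd)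
      (hf.comp (Computable.fst.comp .snd))).to₂).of_eq fun n => by
    induction n with
    | zero => rfl
    | succ n ih => rw [List.range_succ, List.map_append, ← ih]; rfl

lemma computable_firstFresh {f : ℕ → ℕ} (hf : Computable f) : Computable (firstFresh f) := by
  have hnotMem : Primrec₂ fun (l : List ℕ) (x : ℕ) => decide (x ∉ l) :=
    (PrimrecRel.not (PrimrecRel.exists_mem_list Primrec.eq)).decide.of_eq fun l x => by simp
  have hfindIdx : Primrec₂ fun (L l : List ℕ) => L.findIdx fun x => decide (x ∉ l) :=
    Primrec.list_findIdx .fst (hnotMem.comp (Primrec.snd.comp .fst) .snd)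
  refine (hfindIdx.to_comp.comp ((Computable.list_map_range hf).comp
    (Computable.succ.comp .list_length)) .id).of_eq fun l => ?_
  simp [firstFresh, List.findIdx_map, Function.comp_def]

variable {P : ℕ → Prop} [DecidablePred P] {p : ℕ → ℕ}

lemma computable_patchPerm (hP : PrimrecPred P) (hp : Computable p) :
    Computable (patchPerm P p) := by
  have hstep : Computable (patchStep P p) :=
    (Computable.cond (hP.decide.to_comp.comp .list_length) (computable_firstFresh .id)
      (hp.comp (computable_firstFresh hp))).of_eq fun l => by simp [patchStep, Bool.cond_decide]
  have hhist : Computable (patchHist P p) :=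
    (Computable.nat_rec .id (.const []) (Computable.list_concat.comp (Computable.snd.comp .snd)
      (hstep.comp (Computable.snd.comp .snd))).to₂).of_eq fun n => by
      induction n with
      | zero => rfl
      | succ n ih => rw [patchHist, ← ih]; rfl
  exact hstep.comp hhist

end Computability

lemma primrecPred_isSquare : PrimrecPred (IsSquare : ℕ → Prop) := by
  have hR : PrimrecRel fun r n : ℕ => r * r = n :=
    Primrec.eq.comp (Primrec.nat_mul.comp .fst .fst) .snd
  refine (hR.exists_lt.comp Primrec.succ .id).of_eq fun n => ?_
  exact ⟨fun ⟨r, _, hr⟩ => ⟨r, hr.symm⟩,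
    fun ⟨r, hr⟩ => ⟨r, Nat.lt_succ_of_le (hr ▸ Nat.le_mul_self r), hr.symm⟩⟩

lemma infinite_setOf_isSquare : {n : ℕ | IsSquare n}.Infinite :=
  Set.infinite_of_injective_forall_mem (f := fun r : ℕ => r * r)
    (fun _ _ h => Nat.mul_self_inj.1 h) fun r => ⟨r, rfl⟩

lemma partialDensity_isSquare_le (N : ℕ) :
    partialDensity {n | IsSquare n} N ≤ ((Nat.sqrt N + 1 : ℕ) : ℝ) / N := by
  refine div_le_div_of_nonneg_right (Nat.cast_le.2 ?_) (Nat.cast_nonneg _)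
  refine (card_le_card fun n hn => ?_).trans (card_image_le (s := range (Nat.sqrt N + 1))
    (f := fun r => r * r)) |>.trans (card_range _).le
  simp only [mem_filter, mem_range, Set.mem_ofPred_eq] at hn
  obtain ⟨hnN, r, rfl⟩ := hn
  exact mem_image.2 ⟨r, mem_range.2 (Nat.lt_succ_of_le (Nat.le_sqrt.2 hnN.le)), rfl⟩

lemma hasDensity_isSquare : HasDensity {n : ℕ | IsSquare n} 0 := by
  have hbound : Tendsto (fun N : ℕ => 1 / √(N : ℝ) + 1 / N) atTop (𝓝 0) := by
    simpa using ((tendsto_inv_atTop_zero.comp Real.tendsto_sqrt_atTop).comp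
      tendsto_natCast_atTop_atTop).add tendsto_one_div_atTop_nhds_zero_nat
  refine squeeze_zero (fun N => partialDensity_nonneg _ N) (fun N => ?_) hbound
  calc partialDensity {n | IsSquare n} N ≤ ((Nat.sqrt N + 1 : ℕ) : ℝ) / N :=
        partialDensity_isSquare_le N
    _ ≤ (√N + 1) / N := by
        push_cast
        gcongr
        exact Real.nat_sqrt_le_real_sqrt
    _ = 1 / √(N : ℝ) + 1 / N := by rw [add_div, Real.sqrt_div_self']

theorem injection_density_via_permutation (p : ℕ → ℕ)
    (hpinj : Function.Injective p) (hpcomp : Computable p) :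
    ∃ π : ℕ → ℕ, ComputablePerm π ∧
      ∀ S : Set ℕ,
        upperDensity (π ⁻¹' S) = upperDensity (p ⁻¹' S) ∧
        lowerDensity (π ⁻¹' S) = lowerDensity (p ⁻¹' S) := by
  have hinj : Injective (patchPerm IsSquare p) := patchPerm_injective hpinj
  refine ⟨patchPerm IsSquare p,
    ⟨⟨hinj, patchPerm_surjective infinite_setOf_isSquare⟩,
      computable_patchPerm primrecPred_isSquare hpcomp⟩, ?_⟩
  exact upperDensity_lowerDensity_preimage_eq hinj hpinj hasDensity_isSquare
    fun _ hn => exists_le_apply_eq_patchPerm hpinj hn
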